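/- For every n, every p ∈ [0,1] and every map χ:[n]→[n] the following holds. If G_1, …, G_n are independent random graphs on a common vertex set of size n, each sampled from G(n,p), and G is a single random graph sampled from G(n,p), then the probability that (G_1,…,G_n) contains a χ-colored Hamilton cycle is at least the probability that G contains a Hamilton cycle. -/

import Mathlib

/-!
Put all the randomness on one product space of independent Bernoulli coordinates indexed by
pairs (colour `c`, edge `e`), and read `G` off the layer of a fixed colour `c₀`. For a set `P`
of pairs, let `E(P)` be the event that some cyclic ordering of the vertices has each of its
edges `e_i` present in colour `χ i` if `(χ i, e_i) ∈ P`, and in colour `c₀` otherwise. Then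
`E(∅)` is the event that `G` has a Hamilton cycle and `E(all pairs)` the event that the tuple
has a `χ`-coloured one. Adding one pair `x = (c, e)` to `P` cannot lower the probability: the
swap of the coordinates `(c₀, e)` and `(c, e)` preserves the product measure and maps
`E(P) \ E(P ∪ {x})` into `E(P ∪ {x}) \ E(P)`, because a Hamilton cycle uses the edge `e` at
most once.
-/

open MeasureTheory

noncomputable def bernoulliMeasure (p : ℝ) : Measure Bool :=
  (PMF.bernoulli (min (Real.toNNReal p) 1) (min_le_right _ _)).toMeasure

noncomputable def erMeasure (n : ℕ) (p : ℝ) : Measure (Sym2 (Fin n) → Bool) :=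
  Measure.pi fun _ => bernoulliMeasure p

noncomputable def erTupleMeasure (ι : Type*) [Fintype ι] (n : ℕ) (p : ℝ) :
    Measure (ι → Sym2 (Fin n) → Bool) :=
  Measure.pi fun _ => erMeasure n p

def graphOf {n : ℕ} (f : Sym2 (Fin n) → Bool) : SimpleGraph (Fin n) :=
  SimpleGraph.fromEdgeSet {e | f e = true}

def HasChiHamCycle (n : ℕ) (G : Fin n → SimpleGraph (Fin n)) (χ : Fin n → Fin n) : Prop :=
  3 ≤ n ∧ ∃ v : Fin n ≃ Fin n, ∀ i : Fin n, (G (χ i)).Adj (v i) (v (finRotate n i))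

def HasHamCycle (n : ℕ) (G : SimpleGraph (Fin n)) : Prop :=
  ∃ (a : Fin n) (p : G.Walk a a), p.IsHamiltonianCycle

instance isProbabilityMeasure_bernoulliMeasure (p : ℝ) :
    IsProbabilityMeasure (bernoulliMeasure p) :=
  PMF.toMeasure.isProbabilityMeasure _

theorem MeasureTheory.measure_le_of_mapsTo_sdiff {Ω : Type*} [MeasurableSpace Ω] {μ : Measure Ω}
    {f : Ω → Ω} (hf : MeasurePreserving f μ μ) {s t : Set Ω} (hs : MeasurableSet s)
    (ht : MeasurableSet t) (hst : Set.MapsTo f (s \ t) (t \ s)) : μ s ≤ μ t := by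
  calc μ s = μ (s ∩ t) + μ (s \ t) := (measure_inter_add_sdiff s ht).symm
    _ ≤ μ (t ∩ s) + μ (f ⁻¹' (t \ s)) := by
      rw [Set.inter_comm]; gcongr; exact hst
    _ = μ t := by
      rw [hf.measure_preimage (ht.diff hs).nullMeasurableSet, measure_inter_add_sdiff t hs]

theorem MeasureTheory.measurePreserving_comp_equiv {ι β : Type*} [Fintype ι] [MeasurableSpace β]
    (μ : Measure β) [SigmaFinite μ] (σ : ι ≃ ι) :
    MeasurePreserving (fun F : ι → β => F ∘ σ) (Measure.pi fun _ => μ) (Measure.pi fun _ => μ) :=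
  measurePreserving_arrowCongr' _ _ σ.symm (MeasurableEquiv.refl β) fun _ => .id μ

theorem MeasureTheory.measurePreserving_curry_pi {ι κ β : Type*} [Fintype ι] [Fintype κ]
    [MeasurableSpace β] (μ : Measure β) [IsProbabilityMeasure μ] :
    MeasurePreserving (Function.curry : (ι × κ → β) → ι → κ → β)
      (Measure.pi fun _ => μ) (Measure.pi fun _ => Measure.pi fun _ => μ) where
  measurable := (MeasurableEquiv.curry ι κ β).measurable
  map_eq := by
    simpa only [Measure.infinitePi_eq_pi, MeasurableEquiv.coe_curry] using
      Measure.infinitePi_map_curry (ι := ι) (κ := κ) fun _ _ => μ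

namespace Switching

variable {C α W ι : Type*} [DecidableEq C] [DecidableEq α] (c₀ : C)

def reroute (P : Finset (C × α)) (y : C × α) : C × α :=
  if y ∈ P then y else (c₀, y.2)

/-- `F (c, e)` says whether the edge `e` is present in colour `c`. Pattern `w` requests the edge
`(pat w i).2` in colour `(pat w i).1`; requests in `P` are honoured, the others are served by
colour `c₀`. -/
def event (pat : W → ι → C × α) (P : Finset (C × α)) : Set (C × α → Bool) :=
  {F | ∃ w, ∀ i, F (reroute c₀ P (pat w i)) = true}

variable {c₀}

@[simp] lemma reroute_snd (P : Finset (C × α)) (y : C × α) : (reroute c₀ P y).2 = y.2 := by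
  unfold reroute; split_ifs <;> rfl

@[simp] lemma reroute_empty (y : C × α) : reroute c₀ ∅ y = (c₀, y.2) := by
  simp [reroute]

@[simp] lemma reroute_univ [Fintype C] [Fintype α] (y : C × α) :
    reroute c₀ Finset.univ y = y := by
  simp [reroute]

lemma reroute_insert_of_ne {P : Finset (C × α)} {x y : C × α} (h : y ≠ x) :
    reroute c₀ (insert x P) y = reroute c₀ P y := by
  simp [reroute, h]

lemma reroute_insert_self (P : Finset (C × α)) (x : C × α) : reroute c₀ (insert x P) x = x := by
  simp [reroute]

lemma reroute_of_notMem {P : Finset (C × α)} {x : C × α} (hx : x ∉ P) :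
    reroute c₀ P x = (c₀, x.2) := by
  simp [reroute, hx]

lemma reroute_ne {P : Finset (C × α)} {x : C × α} (hx : x ∉ P) (hc : x.1 ≠ c₀) (y : C × α) :
    reroute c₀ P y ≠ x := by
  unfold reroute
  split_ifs with hy
  · exact ne_of_mem_of_not_mem hy hx
  · exact fun h => hc (congrArg Prod.fst h).symm

lemma reroute_insert_of_fst_eq {P : Finset (C × α)} {x : C × α} (hc : x.1 = c₀) :
    reroute c₀ (insert x P) = reroute c₀ P := by
  funext y
  by_cases hy : y = x
  · subst hy
    rw [reroute_insert_self]
    unfold reroute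
    split_ifs <;> simp [← hc]
  · exact reroute_insert_of_ne hy

variable {pat : W → ι → C × α} {P : Finset (C × α)} {x : C × α}

lemma event_insert_of_fst_eq (hc : x.1 = c₀) : event c₀ pat (insert x P) = event c₀ pat P := by
  simp only [event, reroute_insert_of_fst_eq hc]

lemma mem_event_insert_of_apply_eq_true {F : C × α → Bool} {w : W}
    (hw : ∀ i, F (reroute c₀ P (pat w i)) = true) (hFx : F x = true) :
    F ∈ event c₀ pat (insert x P) := by
  refine ⟨w, fun i => ?_⟩
  by_cases hi : pat w i = x
  · rwa [hi, reroute_insert_self]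
  · rw [reroute_insert_of_ne hi]; exact hw i

lemma mapsTo_comp_swap (hpat : ∀ w, Function.Injective (Prod.snd ∘ pat w)) (hx : x ∉ P)
    (hc : x.1 ≠ c₀) :
    Set.MapsTo (fun F => F ∘ Equiv.swap (c₀, x.2) x)
      (event c₀ pat P \ event c₀ pat (insert x P)) (event c₀ pat (insert x P) \ event c₀ pat P) := by
  rintro F ⟨⟨w, hw⟩, hF'⟩
  set j : C × α := (c₀, x.2)
  obtain ⟨i₀, hi₀⟩ : ∃ i₀, pat w i₀ = x := by
    by_contra! h
    exact hF' ⟨w, fun i => by rw [reroute_insert_of_ne (h i)]; exact hw i⟩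
  have hFj : F j = true := by simpa [hi₀, reroute_of_notMem hx] using hw i₀
  have hFx : F x = false := by
    simpa using fun h => hF' (mem_event_insert_of_apply_eq_true hw h)
  refine ⟨⟨w, fun i => ?_⟩, ?_⟩
  · by_cases hi : i = i₀
    · simpa [hi, hi₀, reroute_insert_self] using hFj
    · have hsnd : (pat w i).2 ≠ x.2 := fun h => hi (hpat w (by simp [h, hi₀]))
      have hne : pat w i ≠ x := fun h => hsnd (by rw [h])
      show F (Equiv.swap j x (reroute c₀ (insert x P) (pat w i))) = true
      rw [reroute_insert_of_ne hne, Equiv.swap_apply_of_ne_of_ne]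
      · exact hw i
      · exact fun h => hsnd (by simpa [j] using congrArg Prod.snd h)
      · exact fun h => hsnd (by simpa using congrArg Prod.snd h)
  · rintro ⟨u, hu⟩
    have hne_j : ∀ i, reroute c₀ P (pat u i) ≠ j := fun i h => by
      simpa [h, hFx] using hu i
    refine hF' ⟨u, fun i => ?_⟩
    have hi : pat u i ≠ x := fun h => hne_j i (by rw [h, reroute_of_notMem hx])
    rw [reroute_insert_of_ne hi]
    simpa [Equiv.swap_apply_of_ne_of_ne (hne_j i) (reroute_ne hx hc _)] using hu i

variable [Fintype C] [Fintype α] (μ : Measure Bool) [SigmaFinite μ]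

lemma measure_event_le_insert (hpat : ∀ w, Function.Injective (Prod.snd ∘ pat w))
    (P : Finset (C × α)) (x : C × α) :
    Measure.pi (fun _ => μ) (event c₀ pat P) ≤
      Measure.pi (fun _ => μ) (event c₀ pat (insert x P)) := by
  by_cases hx : x ∈ P
  · rw [Finset.insert_eq_of_mem hx]
  by_cases hc : x.1 = c₀
  · rw [event_insert_of_fst_eq hc]
  exact measure_le_of_mapsTo_sdiff (measurePreserving_comp_equiv μ _) .of_discrete .of_discrete
    (mapsTo_comp_swap hpat hx hc)

lemma measure_event_empty_le (hpat : ∀ w, Function.Injective (Prod.snd ∘ pat w))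
    (P : Finset (C × α)) :
    Measure.pi (fun _ => μ) (event c₀ pat ∅) ≤ Measure.pi (fun _ => μ) (event c₀ pat P) := by
  induction P using Finset.induction_on with
  | empty => rfl
  | insert x P _ ih => exact ih.trans (measure_event_le_insert μ hpat P x)

end Switching

lemma Fin.val_finRotate {n : ℕ} (i : Fin n) :
    (finRotate n i : ℕ) = if (i : ℕ) + 1 = n then 0 else (i : ℕ) + 1 := by
  obtain _ | m := n
  · exact i.elim0
  · rw [coe_finRotate]
    simp [Fin.ext_iff]

lemma finRotate_ne_self {n : ℕ} (hn : 2 ≤ n) (i : Fin n) : finRotate n i ≠ i := by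
  rw [Ne, Fin.ext_iff, Fin.val_finRotate]
  split_ifs <;> omega

lemma finRotate_finRotate_ne_self {n : ℕ} (hn : 3 ≤ n) (i : Fin n) :
    finRotate n (finRotate n i) ≠ i := by
  rw [Ne, Fin.ext_iff, Fin.val_finRotate, Fin.val_finRotate]
  have := i.isLt
  split_ifs <;> omega

namespace SimpleGraph

variable {V : Type*} {G : SimpleGraph V}

lemma Walk.adj_getVert_finRotate {u : V} {p : G.Walk u u} {n : ℕ} (h : p.length = n)
    (i : Fin n) : G.Adj (p.getVert i) (p.getVert (finRotate n i)) := by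
  have hi := i.isLt
  have hsucc := p.adj_getVert_succ (i := i) (by omega)
  rw [Fin.val_finRotate]
  split_ifs with hlast
  · have hwrap : p.getVert n = p.getVert 0 := by rw [← h, Walk.getVert_length, Walk.getVert_zero]
    rwa [hlast, hwrap] at hsucc
  · exact hsucc

lemma Walk.IsHamiltonianCycle.exists_equiv_adj_finRotate [Fintype V] [DecidableEq V] {u : V}
    {p : G.Walk u u} (hp : p.IsHamiltonianCycle) {n : ℕ} (hn : Fintype.card V = n) :
    ∃ v : Fin n ≃ V, ∀ i, G.Adj (v i) (v (finRotate n i)) := by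
  subst hn
  have hlen := hp.length_eq
  have hinj : Function.Injective fun i : Fin (Fintype.card V) => p.getVert i := fun i j hij =>
    Fin.ext (hp.isCycle.getVert_injOn' (by simp; omega) (by simp; omega) hij)
  have hbij := (Fintype.bijective_iff_injective_and_card _).mpr ⟨hinj, Fintype.card_fin _⟩
  exact ⟨Equiv.ofBijective _ hbij, Walk.adj_getVert_finRotate hlen⟩

end SimpleGraph

def cycleEdge {V : Type*} {n : ℕ} (v : Fin n → V) (i : Fin n) : Sym2 V :=
  s(v i, v (finRotate n i))

lemma cycleEdge_injective {V : Type*} {n : ℕ} (hn : 3 ≤ n) {v : Fin n → V}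
    (hv : Function.Injective v) : Function.Injective (cycleEdge v) := by
  intro i j h
  rcases Sym2.eq_iff.mp h with ⟨hij, -⟩ | ⟨hij, hji⟩
  · exact hv hij
  · exact absurd (by rw [← hv hij]; exact hv hji) (finRotate_finRotate_ne_self hn j)

lemma graphOf_adj {n : ℕ} {f : Sym2 (Fin n) → Bool} {a b : Fin n} :
    (graphOf f).Adj a b ↔ f s(a, b) = true ∧ a ≠ b := by
  simp [graphOf]

lemma HasHamCycle.exists_equiv_adj {n : ℕ} {G : SimpleGraph (Fin n)} (h : HasHamCycle n G) :
    3 ≤ n ∧ ∃ v : Fin n ≃ Fin n, ∀ i, G.Adj (v i) (v (finRotate n i)) := by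
  obtain ⟨a, p, hp⟩ := h
  have hlen : p.length = n := by rw [hp.length_eq, Fintype.card_fin]
  exact ⟨hlen ▸ hp.isCycle.three_le_length, hp.exists_equiv_adj_finRotate (Fintype.card_fin n)⟩

lemma erMeasure_eq_pi_preimage {n : ℕ} (p : ℝ) (c : Fin n) (A : Set (Sym2 (Fin n) → Bool)) :
    erMeasure n p A =
      Measure.pi (fun _ => bernoulliMeasure p) {F | (fun e => F (c, e)) ∈ A} :=
  (((measurePreserving_eval _ c).comp (measurePreserving_curry_pi _)).measure_preimage
    MeasurableSet.of_discrete.nullMeasurableSet).symm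

lemma erTupleMeasure_eq_pi_preimage (ι : Type*) [Fintype ι] (n : ℕ) (p : ℝ)
    (T : Set (ι → Sym2 (Fin n) → Bool)) :
    erTupleMeasure ι n p T =
      Measure.pi (fun _ => bernoulliMeasure p) {F | Function.curry F ∈ T} :=
  ((measurePreserving_curry_pi _).measure_preimage
    MeasurableSet.of_discrete.nullMeasurableSet).symm

theorem statement_10_general (n : ℕ) (p : ℝ) (χ : Fin n → Fin n) :
    erMeasure n p {f | HasHamCycle n (graphOf f)} ≤
      erTupleMeasure (Fin n) n p {ω | HasChiHamCycle n (fun i => graphOf (ω i)) χ} := by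
  rcases lt_or_ge n 3 with hn | hn
  · have hempty : {f | HasHamCycle n (graphOf f)} = ∅ :=
      Set.eq_empty_of_forall_notMem fun f hf => hn.not_ge hf.exists_equiv_adj.1
    simp [hempty]
  have : NeZero n := ⟨by omega⟩
  let pat (v : Fin n ≃ Fin n) (i : Fin n) : Fin n × Sym2 (Fin n) := (χ i, cycleEdge v i)
  have hpat : ∀ v, Function.Injective (Prod.snd ∘ pat v) :=
    fun v => cycleEdge_injective hn v.injective
  calc erMeasure n p {f | HasHamCycle n (graphOf f)}
      ≤ erMeasure n p {f | ∃ v : Fin n ≃ Fin n, ∀ i, f (cycleEdge v i) = true} := by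
        refine measure_mono fun f hf => ?_
        obtain ⟨v, hv⟩ := hf.exists_equiv_adj.2
        exact ⟨v, fun i => (graphOf_adj.1 (hv i)).1⟩
    _ = Measure.pi (fun _ => bernoulliMeasure p) (Switching.event 0 pat ∅) := by
        rw [erMeasure_eq_pi_preimage p 0]; simp [Switching.event, pat]
    _ ≤ Measure.pi (fun _ => bernoulliMeasure p) (Switching.event 0 pat Finset.univ) :=
        Switching.measure_event_empty_le _ hpat _
    _ = erTupleMeasure (Fin n) n p
          {ω | ∃ v : Fin n ≃ Fin n, ∀ i, ω (χ i) (cycleEdge v i) = true} := by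
        rw [erTupleMeasure_eq_pi_preimage]; simp [Switching.event, pat]
    _ ≤ _ := by
        refine measure_mono fun ω ⟨v, hv⟩ => ⟨hn, v, fun i => graphOf_adj.2 ⟨hv i, ?_⟩⟩
        exact v.injective.ne (finRotate_ne_self (by omega) i).symm

theorem statement_10 (n : ℕ) (p : ℝ) (hp0 : 0 ≤ p) (hp1 : p ≤ 1) (χ : Fin n → Fin n) :
    erMeasure n p {f | HasHamCycle n (graphOf f)} ≤
      erTupleMeasure (Fin n) n p {ω | HasChiHamCycle n (fun i => graphOf (ω i)) χ} :=
  statement_10_general n p χ
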